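/- A signed graph Σ = (G, σ) on n vertices with connected underlying simple graph G is balanced if and only if D^max(Σ) = D^min(Σ) and the adjacency matrix of the associated signed complete graph K^{D±}(Σ) has largest eigenvalue n − 1; equivalently, if and only if that adjacency matrix has spectrum consisting of n − 1 with multiplicity 1 and −1 with multiplicity n − 1. -/

import Mathlib

open SimpleGraph

/-- The sign (product of edge signs) of a walk in a graph, computed along its darts. -/
def walkSign {V : Type*} {G : SimpleGraph V} (σ : V → V → ℤ) {u v : V} (p : G.Walk u v) : ℤ :=
  (p.darts.map fun d => σ d.toProd.1 d.toProd.2).prod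

/-- `σ` is a signature on `G`: a symmetric function that is `±1`-valued on edges. -/
def IsSignature {V : Type*} (G : SimpleGraph V) (σ : V → V → ℤ) : Prop :=
  (∀ u v, σ u v = σ v u) ∧ ∀ u v, G.Adj u v → σ u v = 1 ∨ σ u v = -1

/-- A signed graph is balanced when every cycle has sign `+1`. -/
def IsBalanced {V : Type*} (G : SimpleGraph V) (σ : V → V → ℤ) : Prop :=
  ∀ (u : V) (p : G.Walk u u), p.IsCycle → walkSign σ p = 1

/-- A walk is a shortest path when it is a path whose length is the graph distance
between its endpoints. -/
def IsShortestPath {V : Type*} {G : SimpleGraph V} {u v : V} (p : G.Walk u v) : Prop :=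
  p.IsPath ∧ p.length = G.dist u v

open scoped Classical in
/-- `σmax u v = +1` if some shortest `u v`-path is positive, `-1` otherwise. -/
noncomputable def sigmaMax {V : Type*} (G : SimpleGraph V) (σ : V → V → ℤ) (u v : V) : ℤ :=
  if ∃ p : G.Walk u v, IsShortestPath p ∧ walkSign σ p = 1 then 1 else -1

open scoped Classical in
/-- `σmin u v = +1` if all shortest `u v`-paths are positive, `-1` otherwise. -/
noncomputable def sigmaMin {V : Type*} (G : SimpleGraph V) (σ : V → V → ℤ) (u v : V) : ℤ :=
  if ∀ p : G.Walk u v, IsShortestPath p → walkSign σ p = 1 then 1 else -1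

/-- The signed distance matrix `D^max`, with `(u,v)` entry `σmax(u,v)·d(u,v)`. -/
noncomputable def Dmax {V : Type*} (G : SimpleGraph V) (σ : V → V → ℤ) : Matrix V V ℝ :=
  Matrix.of fun u v => (sigmaMax G σ u v : ℝ) * (G.dist u v : ℝ)

/-- The signed distance matrix `D^min`, with `(u,v)` entry `σmin(u,v)·d(u,v)`. -/
noncomputable def Dmin {V : Type*} (G : SimpleGraph V) (σ : V → V → ℤ) : Matrix V V ℝ :=
  Matrix.of fun u v => (sigmaMin G σ u v : ℝ) * (G.dist u v : ℝ)

/-- Two vertices are distance-compatible if all shortest paths between them have the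
same sign. -/
def Compatible {V : Type*} (G : SimpleGraph V) (σ : V → V → ℤ) (u v : V) : Prop :=
  ∀ p q : G.Walk u v, IsShortestPath p → IsShortestPath q → walkSign σ p = walkSign σ q

/-- A signed graph is distance-compatible if every pair of vertices is
distance-compatible. -/
def IsCompatibleGraph {V : Type*} (G : SimpleGraph V) (σ : V → V → ℤ) : Prop :=
  ∀ u v, Compatible G σ u v

/-- The largest eigenvalue of a (symmetric) real matrix: the supremum of the set of real
roots of its characteristic polynomial. -/
noncomputable def largestEigenvalue {n : Type*} [Fintype n] [DecidableEq n]
    (M : Matrix n n ℝ) : ℝ :=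
  sSup {x : ℝ | M.charpoly.IsRoot x}

/-!
In a balanced signed graph every closed walk is positive: cutting out nontrivial closed subwalks
leaves a cycle or an edge traversed back and forth. Hence, with `θ u` the sign of any walk from a
fixed root to `u`, every `u`–`v` walk has sign `θ u * θ v`, so
`σmax = σmin = θ u * θ v` and the adjacency matrix of `K^{D±}(Σ)` is `θ θᵀ - I`, whose spectrum
is `n - 1` once and `-1` with multiplicity `n - 1`.

Conversely, if that matrix `M` has eigenvalue `n - 1`, then `M + I` has all entries in `[-1, 1]`
and eigenvalue `n`. At a coordinate of largest modulus the row sum forces all coordinates of the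
eigenvector to have the same modulus; normalising it to `θ : V → {±1}`, each row sum
`∑ⱼ θᵢ (M + I)ᵢⱼ θⱼ = n` of terms at most `1` forces `(M + I)ᵢⱼ = θᵢ θⱼ`, i.e.
`σmax u v = θ u * θ v`. If moreover `D^max = D^min`, on an edge `σ u v = σmax u v`, since the
edge is a shortest path, so `σ` is a switching of the all-positive signature, hence balanced.
-/

section WalkSign

variable {V : Type*} {G : SimpleGraph V} {σ : V → V → ℤ}

@[simp]
lemma walkSign_nil {u : V} : walkSign σ (Walk.nil : G.Walk u u) = 1 := rfl

@[simp]
lemma walkSign_cons {u v w : V} (h : G.Adj u v) (p : G.Walk v w) :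
    walkSign σ (Walk.cons h p) = σ u v * walkSign σ p := by
  simp [walkSign]

@[simp]
lemma walkSign_append {u v w : V} (p : G.Walk u v) (q : G.Walk v w) :
    walkSign σ (p.append q) = walkSign σ p * walkSign σ q := by
  simp [walkSign, Walk.darts_append]

lemma walkSign_reverse (hs : ∀ u v, σ u v = σ v u) {u v : V} (p : G.Walk u v) :
    walkSign σ p.reverse = walkSign σ p := by
  induction p with
  | nil => rfl
  | cons h p ih => simp [Walk.reverse_cons, ih, hs, mul_comm]

lemma walkSign_eq_one_or_neg_one (hσ : IsSignature G σ) {u v : V} (p : G.Walk u v) :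
    walkSign σ p = 1 ∨ walkSign σ p = -1 := by
  induction p with
  | nil => exact Or.inl rfl
  | cons h p ih =>
    rw [walkSign_cons]
    rcases hσ.2 _ _ h with h1 | h1 <;> rcases ih with h2 | h2 <;> simp [h1, h2]

lemma walkSign_mul_self (hσ : IsSignature G σ) {u v : V} (p : G.Walk u v) :
    walkSign σ p * walkSign σ p = 1 := by
  rcases walkSign_eq_one_or_neg_one hσ p with h | h <;> simp [h]

lemma intCast_walkSign_eq_mul {R : Type*} [CommRing R] {θ : V → R} (hθ : ∀ u, θ u * θ u = 1)
    (hadj : ∀ u v, G.Adj u v → (σ u v : R) = θ u * θ v) {u v : V} (p : G.Walk u v) :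
    (walkSign σ p : R) = θ u * θ v := by
  induction p with
  | nil => simp [hθ]
  | @cons u w v h p ih =>
    rw [walkSign_cons, Int.cast_mul, ih, hadj u w h]
    linear_combination θ u * θ v * hθ w

end WalkSign

section Balanced

variable {V : Type*} {G : SimpleGraph V} {σ : V → V → ℤ}

lemma walkSign_eq_one_of_isBalanced (hσ : IsSignature G σ) (hb : IsBalanced G σ) {u : V}
    (c : G.Walk u u) : walkSign σ c = 1 := by
  induction hn : c.length using Nat.strong_induction_on generalizing u with
  | _ n ih =>
  cases c with
  | nil => rfl
  | @cons _ x _ h d =>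
    by_cases hd : d.IsPath
    · by_cases hd1 : d.length = 1
      · cases d with
        | nil => simp at hd1
        | cons h' d' =>
          cases d' with
          | nil => rcases hσ.2 u x h with hux | hux <;> simp [hσ.1 x u, hux]
          | cons => simp at hd1
      · apply hb
        refine (Walk.cons_isCycle_iff d h).2 ⟨hd, fun he => hd1 ?_⟩
        exact hd.length_eq_one_of_mem_edges (Sym2.eq_swap ▸ he)
    · obtain ⟨w, c', ⟨p, q, rfl⟩, hc'⟩ : ∃ w, ∃ c' : G.Walk w w, c'.IsSubwalk d ∧ ¬ c'.Nil := by
        simpa [Walk.isPath_iff_isSubwalk_imp_nil] using hd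
      have hpos : 0 < c'.length := Walk.not_nil_iff_lt_length.mp hc'
      have h₁ := ih c'.length (by simp at hn; omega) c' rfl
      have h₂ := ih (Walk.cons h (p.append q)).length (by simp at hn ⊢; omega) _ rfl
      simp only [walkSign_cons, walkSign_append] at h₂ ⊢
      linear_combination σ u x * walkSign σ p * walkSign σ q * h₁ + h₂

lemma exists_walkSign_eq_mul_of_isBalanced (hσ : IsSignature G σ) (hb : IsBalanced G σ)
    (hG : G.Connected) :
    ∃ θ : V → ℤ, (∀ u, θ u * θ u = 1) ∧ ∀ u v (p : G.Walk u v), walkSign σ p = θ u * θ v := by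
  obtain ⟨v₀⟩ := hG.nonempty
  let P : ∀ u, G.Walk v₀ u := fun u => (hG.preconnected v₀ u).some
  refine ⟨fun u => walkSign σ (P u), fun u => walkSign_mul_self hσ _, fun u v p => ?_⟩
  have hcirc := walkSign_eq_one_of_isBalanced hσ hb ((P u).append (p.append (P v).reverse))
  rw [walkSign_append, walkSign_append, walkSign_reverse hσ.1] at hcirc
  linear_combination walkSign σ (P u) * walkSign σ (P v) * hcirc
    - walkSign σ p * walkSign_mul_self hσ (P u)
    - walkSign σ p * walkSign σ (P u) * walkSign σ (P u) * walkSign_mul_self hσ (P v)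

lemma isBalanced_of_adj_eq_mul {R : Type*} [CommRing R] [CharZero R] {θ : V → R}
    (hθ : ∀ u, θ u * θ u = 1) (hadj : ∀ u v, G.Adj u v → (σ u v : R) = θ u * θ v) :
    IsBalanced G σ := fun u c _ => by
  exact_mod_cast (intCast_walkSign_eq_mul hθ hadj c).trans (hθ u)

end Balanced

section ShortestPaths

variable {V : Type*} {G : SimpleGraph V} {σ : V → V → ℤ} {u v : V}

lemma IsShortestPath.reverse {p : G.Walk u v} (hp : IsShortestPath p) :
    IsShortestPath p.reverse :=
  ⟨hp.1.reverse, by rw [Walk.length_reverse, hp.2, G.dist_comm]⟩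

lemma sigmaMax_comm (hs : ∀ u v, σ u v = σ v u) (u v : V) :
    sigmaMax G σ u v = sigmaMax G σ v u := by
  have key : ∀ {a b : V}, (∃ p : G.Walk a b, IsShortestPath p ∧ walkSign σ p = 1) →
      ∃ p : G.Walk b a, IsShortestPath p ∧ walkSign σ p = 1 := fun ⟨p, hp, hsp⟩ =>
    ⟨p.reverse, hp.reverse, by rwa [walkSign_reverse hs]⟩
  classical
  exact if_congr ⟨key, key⟩ rfl rfl

lemma sigmaMax_eq_of_forall_isShortestPath {s : ℤ} (hs : s = 1 ∨ s = -1)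
    (hex : ∃ p : G.Walk u v, IsShortestPath p)
    (h : ∀ p : G.Walk u v, IsShortestPath p → walkSign σ p = s) : sigmaMax G σ u v = s := by
  obtain ⟨p, hp⟩ := hex
  rcases hs with rfl | rfl
  · exact if_pos ⟨p, hp, h p hp⟩
  · exact if_neg fun ⟨q, hq, hq1⟩ => by simp [h q hq] at hq1

lemma sigmaMin_eq_of_forall_isShortestPath {s : ℤ} (hs : s = 1 ∨ s = -1)
    (hex : ∃ p : G.Walk u v, IsShortestPath p)
    (h : ∀ p : G.Walk u v, IsShortestPath p → walkSign σ p = s) : sigmaMin G σ u v = s := by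
  obtain ⟨p, hp⟩ := hex
  rcases hs with rfl | rfl
  · exact if_pos h
  · exact if_neg fun hall => by simpa using (h p hp).symm.trans (hall p hp)

lemma walkSign_eq_sigmaMax_of_sigmaMax_eq_sigmaMin (hσ : IsSignature G σ)
    (hmm : sigmaMax G σ u v = sigmaMin G σ u v) {p : G.Walk u v} (hp : IsShortestPath p) :
    walkSign σ p = sigmaMax G σ u v := by
  unfold sigmaMax sigmaMin at *
  split_ifs at hmm ⊢ with hmax hmin
  · exact hmin p hp
  · exact (walkSign_eq_one_or_neg_one hσ p).resolve_left fun h1 => hmax ⟨p, hp, h1⟩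

lemma abs_sigmaMax (u v : V) : |sigmaMax G σ u v| = 1 := by
  unfold sigmaMax
  split_ifs <;> rfl

lemma exists_sigmaMax_eq_mul_of_isBalanced (hσ : IsSignature G σ) (hb : IsBalanced G σ)
    (hG : G.Connected) : ∃ θ : V → ℤ, (∀ u, θ u * θ u = 1) ∧
      (∀ u v, sigmaMax G σ u v = θ u * θ v) ∧ ∀ u v, sigmaMin G σ u v = θ u * θ v := by
  obtain ⟨θ, hθ, hsign⟩ := exists_walkSign_eq_mul_of_isBalanced hσ hb hG
  have hs : ∀ u v, θ u * θ v = 1 ∨ θ u * θ v = -1 := fun u v =>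
    mul_self_eq_one_iff.1 (by linear_combination θ u * θ u * hθ v + hθ u)
  have hex : ∀ u v, ∃ p : G.Walk u v, IsShortestPath p := fun u v =>
    (hG.preconnected u v).exists_path_of_dist
  exact ⟨θ, hθ, fun u v => sigmaMax_eq_of_forall_isShortestPath (hs u v) (hex u v) fun p _ => hsign u v p,
    fun u v => sigmaMin_eq_of_forall_isShortestPath (hs u v) (hex u v) fun p _ => hsign u v p⟩

lemma Dmax_eq_Dmin_of_isBalanced (hσ : IsSignature G σ) (hb : IsBalanced G σ)
    (hG : G.Connected) : Dmax G σ = Dmin G σ := by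
  obtain ⟨θ, -, hmax, hmin⟩ := exists_sigmaMax_eq_mul_of_isBalanced hσ hb hG
  ext u v
  simp [Dmax, Dmin, hmax, hmin]

lemma sigma_eq_sigmaMax_of_adj (hσ : IsSignature G σ) (hD : Dmax G σ = Dmin G σ)
    (h : G.Adj u v) : σ u v = sigmaMax G σ u v := by
  have hdist : G.dist u v = 1 := dist_eq_one_iff_adj.mpr h
  have hmm : sigmaMax G σ u v = sigmaMin G σ u v := by
    simpa [Dmax, Dmin, hdist] using congrFun (congrFun hD u) v
  have hp : IsShortestPath h.toWalk := ⟨h.isPath_toWalk, by rw [h.length_toWalk, hdist]⟩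
  simpa using walkSign_eq_sigmaMax_of_sigmaMax_eq_sigmaMin hσ hmm hp

end ShortestPaths

section Charpoly

open Polynomial Matrix

variable {n : Type*} [Fintype n] [DecidableEq n]

lemma Matrix.charpoly_vecMulVec_sub_one {R : Type*} [CommRing R] [Nonempty n] (x y : n → R) :
    (Matrix.vecMulVec x y - 1).charpoly =
      (X - C (x ⬝ᵥ y - 1)) * (X - C (-1)) ^ (Fintype.card n - 1) := by
  obtain ⟨k, hk⟩ := Nat.exists_eq_add_one_of_ne_zero (Fintype.card_pos (α := n)).ne'
  rw [← map_one (Matrix.scalar n), Matrix.charpoly_sub_scalar, Matrix.charpoly_vecMulVec, hk]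
  simp only [add_tsub_cancel_right, sub_comp, pow_comp, X_comp, smul_eq_C_mul, mul_comp, C_comp,
    map_sub, map_neg, map_one]
  ring

lemma Polynomial.roots_X_sub_C_mul_X_sub_C_pow {R : Type*} [CommRing R] [IsDomain R] (a b : R)
    (k : ℕ) : ((X - C a) * (X - C b) ^ k).roots = a ::ₘ Multiset.replicate k b := by
  rw [roots_mul (mul_ne_zero (X_sub_C_ne_zero a) (pow_ne_zero k (X_sub_C_ne_zero b))),
    roots_pow, roots_X_sub_C, roots_X_sub_C, Multiset.nsmul_singleton, Multiset.singleton_add]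

lemma largestEigenvalue_eq_of_roots_eq {M : Matrix n n ℝ} {a b : ℝ} {k : ℕ} (hba : b ≤ a)
    (h : M.charpoly.roots = a ::ₘ Multiset.replicate k b) : largestEigenvalue M = a := by
  have hmem : ∀ x, M.charpoly.IsRoot x ↔ x ∈ a ::ₘ Multiset.replicate k b := fun x => by
    rw [← h, mem_roots M.charpoly_monic.ne_zero]
  refine IsGreatest.csSup_eq ⟨(hmem a).2 (Multiset.mem_cons_self _ _), fun z hz => ?_⟩
  rcases Multiset.mem_cons.1 ((hmem z).1 hz) with rfl | hz
  · exact le_rfl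
  · exact (Multiset.eq_of_mem_replicate hz).trans_le hba

lemma Matrix.IsHermitian.exists_mulVec_eq_largestEigenvalue_smul [Nonempty n] {M : Matrix n n ℝ}
    (hM : M.IsHermitian) : ∃ x ≠ 0, M *ᵥ x = largestEigenvalue M • x := by
  have hroots : {x : ℝ | M.charpoly.IsRoot x} = Set.range hM.eigenvalues := by
    ext x
    rw [Set.mem_ofPred_eq, ← mem_roots M.charpoly_monic.ne_zero, hM.roots_charpoly_eq_eigenvalues]
    simp
  obtain ⟨i, hi⟩ : largestEigenvalue M ∈ Set.range hM.eigenvalues := by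
    rw [largestEigenvalue, hroots]
    exact (Set.range_nonempty _).csSup_mem (Set.finite_range _)
  refine ⟨hM.eigenvectorBasis i, ?_, ?_⟩
  · simpa using hM.eigenvectorBasis.orthonormal.ne_zero i
  · simpa [hi] using hM.mulVec_eigenvectorBasis i

end Charpoly

section RankOne

open Matrix

variable {n : Type*} [Fintype n] {A : Matrix n n ℝ}

lemma Matrix.abs_eq_abs_of_mulVec_eq_card_smul (hA : ∀ i j, |A i j| ≤ 1) {x : n → ℝ}
    (hx : A *ᵥ x = (Fintype.card n : ℝ) • x) (i j : n) : |x i| = |x j| := by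
  have : Nonempty n := ⟨i⟩
  obtain ⟨i₀, hi₀⟩ := Finite.exists_max fun i => |x i|
  suffices h : ∀ j, |x j| = |x i₀| by rw [h i, h j]
  have hle : (Fintype.card n : ℝ) * |x i₀| ≤ ∑ j, |x j| := calc
    (Fintype.card n : ℝ) * |x i₀| = |∑ j, A i₀ j * x j| := by
      rw [← Nat.abs_cast, ← abs_mul]
      simpa [mulVec, dotProduct] using congrArg (fun v => |v i₀|) hx.symm
    _ ≤ ∑ j, |A i₀ j * x j| := Finset.abs_sum_le_sum_abs _ _
    _ ≤ ∑ j, |x j| := Finset.sum_le_sum fun j _ => by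
      rw [abs_mul]; exact mul_le_of_le_one_left (abs_nonneg _) (hA i₀ j)
  have hzero : ∑ j, (|x i₀| - |x j|) = 0 := by
    refine le_antisymm ?_ (Finset.sum_nonneg fun j _ => sub_nonneg.2 (hi₀ j))
    simpa [Finset.sum_sub_distrib] using hle
  intro j
  linarith [(Finset.sum_eq_zero_iff_of_nonneg fun j _ => sub_nonneg.2 (hi₀ j)).1 hzero j
    (Finset.mem_univ j)]

lemma Matrix.eq_mul_of_mulVec_eq_card_smul (hA : ∀ i j, |A i j| ≤ 1) {θ : n → ℝ}
    (hθ : ∀ i, |θ i| = 1) (h : A *ᵥ θ = (Fintype.card n : ℝ) • θ) (i j : n) :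
    A i j = θ i * θ j := by
  have hsq : ∀ i, θ i * θ i = 1 := fun i => by rw [← abs_mul_abs_self, hθ, one_mul]
  have hnonneg : ∀ j, 0 ≤ 1 - θ i * A i j * θ j := fun j => by
    have : |θ i * A i j * θ j| ≤ 1 := by simpa [abs_mul, hθ] using hA i j
    linarith [le_abs_self (θ i * A i j * θ j)]
  have hzero : ∑ j, (1 - θ i * A i j * θ j) = 0 := by
    have hrow : ∑ j, A i j * θ j = Fintype.card n * θ i := by
      simpa [mulVec, dotProduct] using congrFun h i
    simp only [Finset.sum_sub_distrib, mul_assoc, ← Finset.mul_sum, hrow]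
    simp [mul_comm (θ i), mul_assoc, hsq]
  have hj := (Finset.sum_eq_zero_iff_of_nonneg fun j _ => hnonneg j).1 hzero j (Finset.mem_univ j)
  linear_combination -(θ i * θ j) * hj - A i j * hsq i - A i j * θ i * θ i * hsq j

lemma Matrix.exists_eq_mul_of_mulVec_eq_card_smul (hA : ∀ i j, |A i j| ≤ 1) {x : n → ℝ}
    (hx₀ : x ≠ 0) (hx : A *ᵥ x = (Fintype.card n : ℝ) • x) :
    ∃ θ : n → ℝ, (∀ i, θ i * θ i = 1) ∧ ∀ i j, A i j = θ i * θ j := by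
  obtain ⟨i₀, hi₀⟩ := Function.ne_iff.1 hx₀
  have hc : 0 < |x i₀| := abs_pos.2 hi₀
  set θ := |x i₀|⁻¹ • x
  have hθ : ∀ i, |θ i| = 1 := fun i => by
    simp [θ, abs_mul, abs_eq_abs_of_mulVec_eq_card_smul hA hx i i₀, hc.ne']
  have hAθ : A *ᵥ θ = (Fintype.card n : ℝ) • θ := by
    rw [mulVec_smul, hx, smul_comm]
  exact ⟨θ, fun i => by rw [← abs_mul_abs_self, hθ, one_mul],
    eq_mul_of_mulVec_eq_card_smul hA hθ hAθ⟩

lemma exists_eq_mul_of_largestEigenvalue_eq_card_sub_one [DecidableEq n] [Nonempty n]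
    {S : n → n → ℝ} (hS : ∀ u v, S u v = S v u) (hS₁ : ∀ u v, |S u v| ≤ 1)
    (h : largestEigenvalue (of fun u v => if u = v then 0 else S u v) = Fintype.card n - 1) :
    ∃ θ : n → ℝ, (∀ u, θ u * θ u = 1) ∧ ∀ u v, u ≠ v → S u v = θ u * θ v := by
  set M : Matrix n n ℝ := of fun u v => if u = v then 0 else S u v
  have hM : M.IsHermitian := by
    ext u v
    simp [M, hS u v, eq_comm]
  obtain ⟨x, hx₀, hx⟩ := hM.exists_mulVec_eq_largestEigenvalue_smul
  have hA : ∀ u v, |(M + 1) u v| ≤ 1 := fun u v => by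
    by_cases huv : u = v <;> simp [M, huv, hS₁]
  have hAx : (M + 1) *ᵥ x = (Fintype.card n : ℝ) • x := by
    rw [add_mulVec, hx, h, one_mulVec]
    module
  obtain ⟨θ, hθ, hAθ⟩ := exists_eq_mul_of_mulVec_eq_card_smul hA hx₀ hAx
  exact ⟨θ, hθ, fun u v huv => by simpa [M, huv] using hAθ u v⟩

end RankOne

lemma roots_charpoly_offDiag_mul {n : Type*} [Fintype n] [DecidableEq n] [Nonempty n]
    {θ : n → ℝ} (hθ : ∀ u, θ u * θ u = 1) :
    (Matrix.of fun u v => if u = v then (0 : ℝ) else θ u * θ v).charpoly.roots =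
      ((Fintype.card n : ℝ) - 1) ::ₘ Multiset.replicate (Fintype.card n - 1) (-1 : ℝ) := by
  have hM : (Matrix.of fun u v => if u = v then (0 : ℝ) else θ u * θ v) =
      Matrix.vecMulVec θ θ - 1 := by
    ext u v
    by_cases huv : u = v <;> simp [huv, Matrix.vecMulVec_apply, hθ]
  have hdot : θ ⬝ᵥ θ = Fintype.card n := by simp [dotProduct, hθ]
  rw [hM, Matrix.charpoly_vecMulVec_sub_one, hdot, Polynomial.roots_X_sub_C_mul_X_sub_C_pow]

section Spectrum

variable {V : Type*} [Fintype V] [DecidableEq V] {G : SimpleGraph V} {σ : V → V → ℤ}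

lemma roots_charpoly_of_isBalanced (hσ : IsSignature G σ) (hb : IsBalanced G σ)
    (hG : G.Connected) :
    (Matrix.of fun u v => if u = v then (0 : ℝ) else (sigmaMax G σ u v : ℝ)).charpoly.roots =
      ((Fintype.card V : ℝ) - 1) ::ₘ Multiset.replicate (Fintype.card V - 1) (-1 : ℝ) := by
  have : Nonempty V := hG.nonempty
  obtain ⟨θ, hθ, hmax, -⟩ := exists_sigmaMax_eq_mul_of_isBalanced hσ hb hG
  simp only [hmax, Int.cast_mul]
  exact roots_charpoly_offDiag_mul fun u => by exact_mod_cast hθ u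

lemma isBalanced_of_largestEigenvalue_eq [Nonempty V] (hσ : IsSignature G σ)
    (hD : Dmax G σ = Dmin G σ)
    (h : largestEigenvalue (Matrix.of fun u v => if u = v then 0 else (sigmaMax G σ u v : ℝ)) =
      (Fintype.card V : ℝ) - 1) : IsBalanced G σ := by
  obtain ⟨θ, hθ, hθσ⟩ := exists_eq_mul_of_largestEigenvalue_eq_card_sub_one
    (fun u v => by rw [sigmaMax_comm hσ.1]) (fun u v => by simp [← Int.cast_abs, abs_sigmaMax]) h
  refine isBalanced_of_adj_eq_mul hθ fun u v hadj => ?_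
  rw [sigma_eq_sigmaMax_of_adj hσ hD hadj]
  exact hθσ u v hadj.ne

end Spectrum

/-- A signed graph `(G, σ)` on `n` vertices with connected underlying
simple graph is balanced if and only if `D^max(Σ) = D^min(Σ)` and the adjacency matrix of
the associated signed complete graph `K^{D±}(Σ)` has largest eigenvalue `n - 1`;
equivalently, if and only if `D^max(Σ) = D^min(Σ)` and that adjacency matrix has spectrum
`n - 1` with multiplicity `1` and `-1` with multiplicity `n - 1`. -/
theorem balanced_iff_assoc_complete_spectrum {V : Type*} [Fintype V] [DecidableEq V]
    (G : SimpleGraph V) (σ : V → V → ℤ) (hσ : IsSignature G σ) (hG : G.Connected) :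
    (IsBalanced G σ ↔
      (Dmax G σ = Dmin G σ ∧
        largestEigenvalue (Matrix.of fun u v =>
            if u = v then 0 else (sigmaMax G σ u v : ℝ)) =
          (Fintype.card V : ℝ) - 1)) ∧
    (IsBalanced G σ ↔
      (Dmax G σ = Dmin G σ ∧
        (Matrix.of fun u v =>
            if u = v then (0 : ℝ) else (sigmaMax G σ u v : ℝ)).charpoly.roots =
          ((Fintype.card V : ℝ) - 1) ::ₘ
            Multiset.replicate (Fintype.card V - 1) (-1 : ℝ))) := by
  have : Nonempty V := hG.nonempty
  have hle : (-1 : ℝ) ≤ Fintype.card V - 1 := by simp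
  have hD := fun hb => Dmax_eq_Dmin_of_isBalanced hσ hb hG
  have hroots := fun hb => roots_charpoly_of_isBalanced hσ hb hG
  exact ⟨⟨fun hb => ⟨hD hb, largestEigenvalue_eq_of_roots_eq hle (hroots hb)⟩,
      fun h => isBalanced_of_largestEigenvalue_eq hσ h.1 h.2⟩,
    ⟨fun hb => ⟨hD hb, hroots hb⟩,
      fun h => isBalanced_of_largestEigenvalue_eq hσ h.1 (largestEigenvalue_eq_of_roots_eq hle h.2)⟩⟩
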